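/- Let n ≥ 4, p = p₀(n) = (n+1+√(n²+10n−7))/(2(n−1)), let R > 0 with 8R ≥ 1, let j ≥ 1 be an integer with a_j = 3·4^{j−1} − 1, and let A > 0. Suppose F ∈ C²([a_jR, T)) satisfies F'(a_jR) ≥ 0 and F''(t) ≥ A (t − a_jR)^{(n−1)(1−p/2)} ( log( (t+(a_j−2)R) / (2(a_j−1)R) ) )^{(p^j−1)/(p−1)} for a_jR ≤ t < T. Then for all t with (a_j+1)R ≤ t < T one has F'(t) ≥ ( A / ( 2^{n−(n−1)p/2} a_j ) ) · ( t − (a_j+1)R )^{n−(n−1)p/2} ( log( (t+(a_j+1)R) / (2(a_j+1)R) ) )^{(p^j−1)/(p−1)}. -/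

import Mathlib

/-!
Write `a = a_j`, `q = n - (n-1)p/2` and `β = (p^j-1)/(p-1)`; since `p₀(n) ≤ 2` for `n ≥ 4`,
`q ≥ 1`. As `F'' ≥ 0`, `F'` is nondecreasing, so `F'(s₀) ≥ 0` at `s₀ = ((a-1)t + (a+1)R)/(a+1)`,
the point beyond which the logarithm in the hypothesis dominates `M = log((t+(a+1)R)/(2(a+1)R))`.
Integrating `F'' ≥ A M^β (s-aR)^(q-1)` over `[s₀, t]` gives
`F'(t) ≥ A M^β ((t-aR)^q - (s₀-aR)^q)/q`. With `X = t-(a+1)R` one has `t-aR ≥ X` and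
`s₀-aR = rX` for `r = (a-1)/(a+1)`, so `r^q ≤ r` bounds this below by `2 A M^β X^q/(q(a+1))`,
and Bernoulli's `2^q ≥ 1+q` turns the constant into `1/(2^q a)`.
-/

/-- `a_j = 3·4^{j-1} - 1`. -/
noncomputable def aseq (j : ℕ) : ℝ := 3 * 4 ^ (j - 1) - 1

open Real Set

theorem sub_le_sub_of_hasDerivWithinAt_le {f g f' g' : ℝ → ℝ} {a b : ℝ} (hab : a ≤ b)
    (hf : ∀ x ∈ Icc a b, HasDerivWithinAt f (f' x) (Icc a b) x)
    (hg : ∀ x ∈ Icc a b, HasDerivWithinAt g (g' x) (Icc a b) x)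
    (hle : ∀ x ∈ Ioo a b, g' x ≤ f' x) : g b - g a ≤ f b - f a := by
  have hmono : MonotoneOn (f - g) (Icc a b) :=
    monotoneOn_of_hasDerivWithinAt_nonneg (convex_Icc a b)
      (fun x hx => ((hf x hx).sub (hg x hx)).continuousWithinAt)
      (fun x hx => ((hf x (interior_subset hx)).sub (hg x (interior_subset hx))).mono
        interior_subset)
      (fun x hx => sub_nonneg.2 (hle x (by rwa [interior_Icc] at hx)))
  have := hmono (left_mem_Icc.2 hab) (right_mem_Icc.2 hab) hab
  simp only [Pi.sub_apply] at this
  linarith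

theorem div_mul_sub_rpow_le_sub_of_hasDerivWithinAt {F' F'' : ℝ → ℝ} {b c q s t : ℝ}
    (hq : 1 ≤ q) (hst : s ≤ t)
    (hF'' : ∀ x ∈ Icc s t, HasDerivWithinAt F' (F'' x) (Icc s t) x)
    (hlow : ∀ x ∈ Ioo s t, c * (x - b) ^ (q - 1) ≤ F'' x) :
    c / q * ((t - b) ^ q - (s - b) ^ q) ≤ F' t - F' s := by
  have hpow : ∀ x, HasDerivAt (fun y => c / q * (y - b) ^ q) (c * (x - b) ^ (q - 1)) x := by
    intro x
    have hq₀ : q ≠ 0 := (zero_lt_one.trans_le hq).ne'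
    refine ((((hasDerivAt_id' x).sub_const b).rpow_const (Or.inr hq)).const_mul
      (c / q)).congr_deriv ?_
    field_simp
  rw [mul_sub]
  exact sub_le_sub_of_hasDerivWithinAt_le hst hF'' (fun x _ => (hpow x).hasDerivWithinAt) hlow

theorem one_sub_mul_rpow_le_add_rpow_sub_mul_rpow {q r X R : ℝ} (hq : 1 ≤ q) (hr₀ : 0 ≤ r)
    (hr₁ : r ≤ 1) (hX : 0 ≤ X) (hR : 0 ≤ R) :
    (1 - r) * X ^ q ≤ (X + R) ^ q - (r * X) ^ q := by
  have hXR : X ^ q ≤ (X + R) ^ q := rpow_le_rpow hX (by linarith) (by linarith)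
  have hr : r ^ q ≤ r := by simpa using rpow_le_rpow_of_exponent_ge' hr₀ hr₁ zero_le_one hq
  have := mul_le_mul_of_nonneg_right hr (rpow_nonneg hX q)
  rw [mul_rpow hr₀ hX]
  linarith

theorem one_div_two_rpow_mul_le_two_div_mul {q a : ℝ} (hq : 1 ≤ q) (ha : 1 ≤ a) :
    1 / (2 ^ q * a) ≤ 2 / (q * (a + 1)) := by
  have hbern : 1 + q ≤ (2 : ℝ) ^ q := by
    simpa [one_add_one_eq_two] using one_add_mul_self_le_rpow_one_add (s := 1) (by norm_num) hq
  rw [div_le_div_iff₀ (by positivity) (by positivity)]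
  nlinarith

/-- `p₀(n)`, the positive root of `2 + (n+1)p - (n-1)p² = 0`. -/
noncomputable def criticalExponent (n : ℝ) : ℝ :=
  (n + 1 + √(n ^ 2 + 10 * n - 7)) / (2 * (n - 1))

theorem one_lt_criticalExponent {n : ℝ} (hn : 1 < n) : 1 < criticalExponent n := by
  have hsqrt : n ≤ √(n ^ 2 + 10 * n - 7) := le_sqrt_of_sq_le (by linarith)
  rw [criticalExponent, lt_div_iff₀ (by linarith)]
  linarith

theorem criticalExponent_le_two {n : ℝ} (hn : 4 ≤ n) : criticalExponent n ≤ 2 := by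
  have hsqrt : √(n ^ 2 + 10 * n - 7) ≤ 3 * n - 5 :=
    sqrt_le_iff.2 ⟨by linarith, by nlinarith⟩
  rw [criticalExponent, div_le_iff₀ (by linarith)]
  linarith

theorem two_le_aseq (j : ℕ) : 2 ≤ aseq j := by
  have : (1 : ℝ) ≤ 4 ^ (j - 1) := one_le_pow₀ (by norm_num)
  rw [aseq]
  linarith

theorem log_div_le_log_div_of_le {a R t x : ℝ} (ha : 1 < a) (hR : 0 < R) (ht : (a + 1) * R ≤ t)
    (hx : ((a - 1) * t + (a + 1) * R) / (a + 1) ≤ x) :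
    log ((t + (a + 1) * R) / (2 * (a + 1) * R)) ≤ log ((x + (a - 2) * R) / (2 * (a - 1) * R)) := by
  rw [div_le_iff₀ (by linarith)] at hx
  have h₁ : 0 < 2 * (a + 1) * R := by positivity
  have h₂ : 0 < 2 * (a - 1) * R := mul_pos (by linarith) hR
  refine log_le_log (div_pos (by nlinarith) h₁) ((div_le_div_iff₀ h₁ h₂).2 ?_)
  nlinarith

theorem lower_bound_of_second_deriv_ge_rpow_mul_log_rpow {a q β R A T t : ℝ} {F' F'' : ℝ → ℝ}
    (ha : 1 < a) (hq : 1 ≤ q) (hβ : 0 ≤ β) (hR : 0 < R) (hA : 0 ≤ A)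
    (hF'' : ∀ x ∈ Ico (a * R) T, HasDerivWithinAt F' (F'' x) (Ico (a * R) T) x)
    (hF'0 : 0 ≤ F' (a * R))
    (hlow : ∀ x, a * R ≤ x → x < T →
      A * (x - a * R) ^ (q - 1) * log ((x + (a - 2) * R) / (2 * (a - 1) * R)) ^ β ≤ F'' x)
    (ht : (a + 1) * R ≤ t) (htT : t < T) :
    A * log ((t + (a + 1) * R) / (2 * (a + 1) * R)) ^ β / q *
      (2 / (a + 1) * (t - (a + 1) * R) ^ q) ≤ F' t := by
  set M := log ((t + (a + 1) * R) / (2 * (a + 1) * R))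
  set s₀ := ((a - 1) * t + (a + 1) * R) / (a + 1)
  have hs₀ : a * R ≤ s₀ := by
    rw [le_div_iff₀ (by linarith)]
    nlinarith
  have hs₀t : s₀ ≤ t := by
    rw [div_le_iff₀ (by linarith)]
    nlinarith
  have hderiv : ∀ {u v}, a * R ≤ u → v < T →
      ∀ x ∈ Icc u v, HasDerivWithinAt F' (F'' x) (Icc u v) x := fun hu hv x hx =>
    (hF'' x ⟨hu.trans hx.1, hx.2.trans_lt hv⟩).mono fun y hy => ⟨hu.trans hy.1, hy.2.trans_lt hv⟩
  have hM : 0 ≤ M := log_nonneg ((one_le_div (by positivity)).2 (by linarith))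
  have hF''₀ : ∀ x ∈ Ioo (a * R) s₀, 0 * (x - a * R) ^ (q - 1) ≤ F'' x := fun x hx => by
    have hlog : 0 ≤ log ((x + (a - 2) * R) / (2 * (a - 1) * R)) :=
      log_nonneg ((one_le_div (mul_pos (by linarith) hR)).2 (by linarith [hx.1]))
    rw [zero_mul]
    refine le_trans ?_ (hlow x hx.1.le (hx.2.trans (hs₀t.trans_lt htT)))
    have := rpow_nonneg (sub_nonneg.2 hx.1.le) (q - 1)
    positivity
  have hF's₀ : 0 ≤ F' s₀ := by
    have := div_mul_sub_rpow_le_sub_of_hasDerivWithinAt hq hs₀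
      (hderiv le_rfl (hs₀t.trans_lt htT)) hF''₀
    rw [zero_div, zero_mul] at this
    linarith
  have hint : A * M ^ β / q * ((t - a * R) ^ q - (s₀ - a * R) ^ q) ≤ F' t - F' s₀ := by
    refine div_mul_sub_rpow_le_sub_of_hasDerivWithinAt hq hs₀t (hderiv hs₀ htT) fun x hx => ?_
    have hMx : M ^ β ≤ log ((x + (a - 2) * R) / (2 * (a - 1) * R)) ^ β :=
      rpow_le_rpow hM (log_div_le_log_div_of_le ha hR ht hx.1.le) hβ
    have := rpow_nonneg (sub_nonneg.2 (hs₀.trans hx.1.le)) (q - 1)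
    calc A * M ^ β * (x - a * R) ^ (q - 1)
        ≤ A * (x - a * R) ^ (q - 1) * log ((x + (a - 2) * R) / (2 * (a - 1) * R)) ^ β := by
          rw [mul_right_comm]; gcongr
      _ ≤ F'' x := hlow x (hs₀.trans hx.1.le) (hx.2.trans htT)
  have hgap : 2 / (a + 1) * (t - (a + 1) * R) ^ q ≤ (t - a * R) ^ q - (s₀ - a * R) ^ q := by
    have := one_sub_mul_rpow_le_add_rpow_sub_mul_rpow (r := (a - 1) / (a + 1)) hq
      (div_nonneg (by linarith) (by linarith)) ((div_le_one (by linarith)).2 (by linarith))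
      (sub_nonneg.2 ht) hR.le
    convert this using 3
    · field_simp; ring
    · ring
    · simp only [s₀]; field_simp; ring
  have hc : 0 ≤ A * M ^ β / q := by
    have := rpow_nonneg hM β
    positivity
  linarith [mul_le_mul_of_nonneg_left hgap hc]

theorem first_integration_step_general
    (n : ℕ) (hn : 4 ≤ n) (p R A T : ℝ) (j : ℕ)
    (hp : p = ((n : ℝ) + 1 + Real.sqrt ((n : ℝ) ^ 2 + 10 * (n : ℝ) - 7)) / (2 * ((n : ℝ) - 1)))
    (hR : 0 < R) (hA : 0 < A)
    (F' F'' : ℝ → ℝ)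
    (hF'' : ∀ t ∈ Set.Ico (aseq j * R) T, HasDerivWithinAt F' (F'' t) (Set.Ico (aseq j * R) T) t)
    (hF'0 : 0 ≤ F' (aseq j * R))
    (hlow : ∀ t, aseq j * R ≤ t → t < T →
      A * (t - aseq j * R) ^ (((n : ℝ) - 1) * (1 - p / 2)) *
          Real.log ((t + (aseq j - 2) * R) / (2 * (aseq j - 1) * R)) ^
            ((p ^ j - 1) / (p - 1)) ≤ F'' t) :
    ∀ t, (aseq j + 1) * R ≤ t → t < T →
      A / ((2 : ℝ) ^ ((n : ℝ) - ((n : ℝ) - 1) * p / 2) * aseq j) *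
          (t - (aseq j + 1) * R) ^ ((n : ℝ) - ((n : ℝ) - 1) * p / 2) *
          Real.log ((t + (aseq j + 1) * R) / (2 * (aseq j + 1) * R)) ^
            ((p ^ j - 1) / (p - 1)) ≤ F' t := by
  intro t ht htT
  have hn' : (4 : ℝ) ≤ n := by exact_mod_cast hn
  have hp₁ : 1 < p := hp ▸ one_lt_criticalExponent (by linarith)
  have hp₂ : p ≤ 2 := hp ▸ criticalExponent_le_two hn'
  set a := aseq j
  set q := (n : ℝ) - ((n : ℝ) - 1) * p / 2
  set β := (p ^ j - 1) / (p - 1)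
  set M := log ((t + (a + 1) * R) / (2 * (a + 1) * R))
  have ha : 2 ≤ a := two_le_aseq j
  have hβ : 0 ≤ β := div_nonneg (sub_nonneg.2 (one_le_pow₀ hp₁.le)) (by linarith)
  have hexp : ((n : ℝ) - 1) * (1 - p / 2) = q - 1 := by ring
  have hq : 1 ≤ q := by
    have := mul_nonneg (by linarith : (0 : ℝ) ≤ n - 1) (by linarith : (0 : ℝ) ≤ 1 - p / 2)
    linarith
  have hM : 0 ≤ M ^ β :=
    rpow_nonneg (log_nonneg ((one_le_div (by positivity)).2 (by linarith))) β
  have hX : 0 ≤ (t - (a + 1) * R) ^ q := rpow_nonneg (by linarith) q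
  calc A / (2 ^ q * a) * (t - (a + 1) * R) ^ q * M ^ β
      = A * M ^ β * (t - (a + 1) * R) ^ q * (1 / (2 ^ q * a)) := by ring
    _ ≤ A * M ^ β * (t - (a + 1) * R) ^ q * (2 / (q * (a + 1))) := by
        gcongr ?_ * ?_
        exact one_div_two_rpow_mul_le_two_div_mul hq (one_le_two.trans ha)
    _ = A * M ^ β / q * (2 / (a + 1) * (t - (a + 1) * R) ^ q) := by field_simp
    _ ≤ F' t := lower_bound_of_second_deriv_ge_rpow_mul_log_rpow (by linarith) hq hβ hR hA.le
        hF'' hF'0 (by simpa only [hexp] using hlow) ht htT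

/-- **First integration step** (beginning of the proof of Proposition 4.1):
a logarithmic lower bound for `F''` on `[a_jR, T)` together with
`F'(a_jR) ≥ 0` yields, for `(a_j+1)R ≤ t < T`,
`F'(t) ≥ (A / (2^{n-(n-1)p/2} a_j)) (t-(a_j+1)R)^{n-(n-1)p/2}
  (log((t+(a_j+1)R)/(2(a_j+1)R)))^{(p^j-1)/(p-1)}`. -/
theorem first_integration_step
    (n : ℕ) (hn : 4 ≤ n) (p R A T : ℝ) (j : ℕ) (hj : 1 ≤ j)
    (hp : p = ((n : ℝ) + 1 + Real.sqrt ((n : ℝ) ^ 2 + 10 * (n : ℝ) - 7)) / (2 * ((n : ℝ) - 1)))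
    (hR : 0 < R) (h8R : 1 ≤ 8 * R) (hA : 0 < A)
    (F F' F'' : ℝ → ℝ)
    (hF' : ∀ t ∈ Set.Ico (aseq j * R) T, HasDerivWithinAt F (F' t) (Set.Ico (aseq j * R) T) t)
    (hF'' : ∀ t ∈ Set.Ico (aseq j * R) T, HasDerivWithinAt F' (F'' t) (Set.Ico (aseq j * R) T) t)
    (hcont : ContinuousOn F'' (Set.Ico (aseq j * R) T))
    (hF'0 : 0 ≤ F' (aseq j * R))
    (hlow : ∀ t, aseq j * R ≤ t → t < T →
      A * (t - aseq j * R) ^ (((n : ℝ) - 1) * (1 - p / 2)) *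
          Real.log ((t + (aseq j - 2) * R) / (2 * (aseq j - 1) * R)) ^
            ((p ^ j - 1) / (p - 1)) ≤ F'' t) :
    ∀ t, (aseq j + 1) * R ≤ t → t < T →
      A / ((2 : ℝ) ^ ((n : ℝ) - ((n : ℝ) - 1) * p / 2) * aseq j) *
          (t - (aseq j + 1) * R) ^ ((n : ℝ) - ((n : ℝ) - 1) * p / 2) *
          Real.log ((t + (aseq j + 1) * R) / (2 * (aseq j + 1) * R)) ^
            ((p ^ j - 1) / (p - 1)) ≤ F' t :=
  first_integration_step_general n hn p R A T j hp hR hA F' F'' hF'' hF'0 hlow
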